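/- arXiv:2505.02544 — 9 statements merged into one kernel-verified Lean document; each statement's English description precedes it below -/
import Mathlib

section
/- Let a system of fundamental sequences on an ordinal Γ be nested (i.e. it is never the case for γ < β ≤ Γ and n > 1 that γ > β[n] > γ[n]). Let n > 1 and (n_i)_{i∈ω} be a sequence of natural numbers with n ≤ n_i for each i. Then for each ordinal α ≤ Γ there exists k ∈ ℕ such that α[n] = α[n_0][n_1]…[n_k]. -/
open Ordinal

/-- A system of fundamental sequences on `Γ`: to each ordinal `α ≤ Γ` we associate a
non-decreasing sequence `fs α n` with `sup {fs α n + 1 : n} = α` for `α ≠ 0`, and `fs 0 n = 0`. -/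
structure FSSystem (Γ : Ordinal) where
  fs : Ordinal → ℕ → Ordinal
  fs_zero : ∀ n, fs 0 n = 0
  mono : ∀ α, α ≤ Γ → Monotone (fs α)
  sup_eq : ∀ α, α ≤ Γ → α ≠ 0 → (⨆ n : ℕ, fs α n + 1) = α

/-- The system is nested: it is never the case, for `γ < β ≤ Γ` and `n > 1`,
that `γ > β[n] > γ[n]`. -/
def FSSystem.Nested {Γ : Ordinal} (S : FSSystem Γ) : Prop :=
  ∀ γ β (n : ℕ), γ < β → β ≤ Γ → 1 < n → ¬ (S.fs γ n < S.fs β n ∧ S.fs β n < γ)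

/-- Iterated evaluation `α[s_0][s_1]…[s_{m-1}]` along a list. -/
def FSSystem.evalL {Γ : Ordinal} (S : FSSystem Γ) (α : Ordinal) (s : List ℕ) : Ordinal :=
  s.foldl S.fs α

/-!
Put `a₀ = α` and `a_{i+1} = a_i[n_i]`. If `α[n]` were never of the form `a_{k+1}`, then
`α[n] < a_{i+1}` for every `i`: the case `i = 0` is monotonicity of `α[·]`, and if
`α[n] < a_{i+1} < α`, nestedness applied to `a_{i+1} < α` forces `α[n] ≤ a_{i+1}[n] ≤ a_{i+2}`.
In particular no `a_{i+1}` is `0`, so `a_{i+2} = a_{i+1}[n_{i+1}] < a_{i+1}`, an infinite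
descending sequence of ordinals.
-/

namespace FSSystem

variable {Γ : Ordinal} (S : FSSystem Γ)

theorem fs_lt {α : Ordinal} (hα : α ≤ Γ) (hα0 : α ≠ 0) (m : ℕ) : S.fs α m < α :=
  calc S.fs α m < S.fs α m + 1 := lt_add_one _
    _ ≤ ⨆ k : ℕ, S.fs α k + 1 := le_ciSup Ordinal.bddAbove_of_small m
    _ = α := S.sup_eq α hα hα0

theorem fs_le {α : Ordinal} (hα : α ≤ Γ) (m : ℕ) : S.fs α m ≤ α := by
  rcases eq_or_ne α 0 with rfl | hα0
  · rw [S.fs_zero]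
  · exact (S.fs_lt hα hα0 m).le

theorem evalL_le {α : Ordinal} (hα : α ≤ Γ) (s : List ℕ) : S.evalL α s ≤ α := by
  induction s generalizing α with
  | nil => exact le_rfl
  | cons m s ih => exact (ih ((S.fs_le hα m).trans hα)).trans (S.fs_le hα m)

theorem evalL_append_singleton (α : Ordinal) (s : List ℕ) (m : ℕ) :
    S.evalL α (s ++ [m]) = S.fs (S.evalL α s) m := by
  simp only [evalL, List.foldl_append, List.foldl_cons, List.foldl_nil]

theorem evalL_map_range_succ (α : Ordinal) (f : ℕ → ℕ) (k : ℕ) :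
    S.evalL α ((List.range (k + 1)).map f) = S.fs (S.evalL α ((List.range k).map f)) (f k) := by
  rw [List.range_succ, List.map_append, List.map_singleton, evalL_append_singleton]

variable {S} in
theorem Nested.fs_le_fs_of_fs_lt (hN : S.Nested) {α β : Ordinal} (hβα : β ≤ α) (hα : α ≤ Γ)
    {n m : ℕ} (hn : 1 < n) (hnm : n ≤ m) (hαβ : S.fs α n < β) : S.fs α n ≤ S.fs β m := by
  rcases hβα.lt_or_eq with hβα | rfl
  · have hβn : S.fs α n ≤ S.fs β n := not_lt.1 fun h => hN β α n hβα hα hn ⟨h, hαβ⟩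
    exact hβn.trans (S.mono β (hβα.le.trans hα) hnm)
  · exact S.mono β hα hnm

end FSSystem

/-- In a nested system, if `n > 1` and `n ≤ n_i` for all `i`, then for each `α ≤ Γ` there is a
`k` with `α[n] = α[n_0][n_1]…[n_k]`. -/
theorem nested_sequence_lemma {Γ : Ordinal} (S : FSSystem Γ) (hN : S.Nested)
    (n : ℕ) (hn : 1 < n) (nseq : ℕ → ℕ) (hseq : ∀ i, n ≤ nseq i)
    (α : Ordinal) (hα : α ≤ Γ) :
    ∃ k : ℕ, S.fs α n = S.evalL α ((List.range (k + 1)).map nseq) := by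
  set a : ℕ → Ordinal := fun k => S.evalL α ((List.range k).map nseq)
  have ha_succ (i : ℕ) : a (i + 1) = S.fs (a i) (nseq i) := S.evalL_map_range_succ α nseq i
  have haΓ (i : ℕ) : a i ≤ Γ := (S.evalL_le hα _).trans hα
  by_contra! hne
  have hlt (i : ℕ) : S.fs α n < a (i + 1) := by
    induction i with
    | zero => exact (S.mono α hα (hseq 0)).lt_of_ne (hne 0)
    | succ i ih =>
      refine lt_of_le_of_ne ?_ (hne (i + 1))
      rw [ha_succ (i + 1)]
      exact hN.fs_le_fs_of_fs_lt (S.evalL_le hα _) hα hn (hseq (i + 1)) ih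
  obtain ⟨i, hi⟩ := WellFounded.not_rel_apply_succ (r := (· < ·)) fun i => a (i + 1)
  refine hi ?_
  rw [ha_succ (i + 1)]
  exact S.fs_lt (haΓ _) (hlt i).ne_bot _
end

section
/- Assume a nested system of fundamental sequences on Γ and let s ⊆ t be finite sets of naturals with min t > 1. If s is α-large for some ordinal α ≤ Γ, then t is α-large too. Moreover, if s ⊊ t and t is α-size, then s is α-small. -/
open Ordinal

/-- Evaluation `α[s]` along the increasing enumeration of a finite set `s`. -/
def FSSystem.evalF {Γ : Ordinal} (S : FSSystem Γ) (α : Ordinal) (s : Finset ℕ) : Ordinal :=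
  S.evalL α (s.sort (· ≤ ·))

/-- `s` is `α`-large when `α[s] = 0`. -/
def FSSystem.Large {Γ : Ordinal} (S : FSSystem Γ) (α : Ordinal) (s : Finset ℕ) : Prop :=
  S.evalF α s = 0

/-- `s` is `α`-small when `α[s] > 0`. -/
def FSSystem.Small {Γ : Ordinal} (S : FSSystem Γ) (α : Ordinal) (s : Finset ℕ) : Prop :=
  0 < S.evalF α s

/-- `s` is `α`-size when `s` is `α`-large but `s ∖ {max s}` is `α`-small. -/
def FSSystem.Size {Γ : Ordinal} (S : FSSystem Γ) (α : Ordinal) (s : Finset ℕ) : Prop :=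
  S.evalL α (s.sort (· ≤ ·)) = 0 ∧ 0 < S.evalL α ((s.sort (· ≤ ·)).dropLast)

/-!
The key consequence of nestedness: for `1 < k ≤ m`, descending from `δ[m]` by repeated
application of `·[m]` reaches `δ[k]`, since every `x` with `δ[k] < x < δ` satisfies
`δ[k] ≤ x[k] ≤ x[m] < x`. Hence any property preserved by `·[m]` passes from `δ[m]` to `δ[k]`.
Applied to the property "`γ[m :: l] = 0`", this shows that prepending an entry `n ≤ min l`
preserves largeness of `l`, which gives the monotonicity along sublists. For the size statement
one shows in the same way that replacing the last entry `M` of a large list by a new first entry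
`x ≤ min (v ++ [M])` keeps it large.
-/

lemma Finset.sort_sublist_sort_of_subset {α : Type*} [LinearOrder α] {s t : Finset α}
    (h : s ⊆ t) : (s.sort (· ≤ ·)).Sublist (t.sort (· ≤ ·)) :=
  List.sublist_of_subperm_of_pairwise
    (List.subperm_of_subset (s.sort_nodup _) fun a ha => by simpa using h (by simpa using ha))
    (s.pairwise_sort _) (t.pairwise_sort _)

namespace FSSystem

variable {Γ : Ordinal} (S : FSSystem Γ)

@[simp]
lemma evalL_nil (β : Ordinal) : S.evalL β [] = β := rfl

@[simp]
lemma evalL_cons (β : Ordinal) (n : ℕ) (l : List ℕ) :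
    S.evalL β (n :: l) = S.evalL (S.fs β n) l := rfl

lemma fs_lt_s2 {β : Ordinal} (hβ : β ≤ Γ) (hβ0 : β ≠ 0) (n : ℕ) : S.fs β n < β := by
  rw [← Order.add_one_le_iff]
  conv_rhs => rw [← S.sup_eq β hβ hβ0]
  exact Ordinal.le_iSup (fun n => S.fs β n + 1) n

lemma fs_le_s2 {β : Ordinal} (hβ : β ≤ Γ) (n : ℕ) : S.fs β n ≤ β := by
  rcases eq_or_ne β 0 with rfl | hβ0
  · rw [S.fs_zero]
  · exact (S.fs_lt_s2 hβ hβ0 n).le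

lemma fs_le_top {β : Ordinal} (hβ : β ≤ Γ) (n : ℕ) : S.fs β n ≤ Γ :=
  (S.fs_le_s2 hβ n).trans hβ

variable {S}

lemma Nested.fs_induction (hN : S.Nested) {P : Ordinal → Prop} {k m : ℕ}
    (hP : ∀ γ ≤ Γ, P γ → P (S.fs γ m)) (hk : 1 < k) (hkm : k ≤ m)
    {δ : Ordinal} (hδ : δ ≤ Γ) (hδm : P (S.fs δ m)) : P (S.fs δ k) := by
  rcases eq_or_ne δ 0 with rfl | hδ0
  · rwa [S.fs_zero] at hδm ⊢
  suffices ∀ x, S.fs δ k ≤ x → x < δ → P x → P (S.fs δ k) from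
    this _ (S.mono δ hδ hkm) (S.fs_lt_s2 hδ hδ0 m) hδm
  intro x
  induction x using WellFoundedLT.induction with
  | _ x ih =>
    intro hkx hxδ hx
    rcases hkx.eq_or_lt with rfl | hkx
    · exact hx
    have hxΓ : x ≤ Γ := hxδ.le.trans hδ
    have hk_le_xk : S.fs δ k ≤ S.fs x k :=
      not_lt.mp fun h => hN x δ k hxδ hδ hk ⟨h, hkx⟩
    have hxm : S.fs x m < x := S.fs_lt_s2 hxΓ (pos_of_gt hkx).ne' m
    exact ih _ hxm (hk_le_xk.trans (S.mono x hxΓ hkm)) (hxm.trans hxδ) (hP x hxΓ hx)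

lemma Nested.evalL_cons_eq_zero (hN : S.Nested) {l : List ℕ} (hl : l.Pairwise (· ≤ ·))
    {n : ℕ} (hn : 1 < n) (hnl : ∀ e ∈ l, n ≤ e) {β : Ordinal} (hβ : β ≤ Γ)
    (h : S.evalL β l = 0) : S.evalL β (n :: l) = 0 := by
  induction l generalizing n β with
  | nil =>
    rw [evalL_nil] at h
    rw [h, evalL_cons, S.fs_zero, evalL_nil]
  | cons m l ih =>
    obtain ⟨hml, hl⟩ := List.pairwise_cons.mp hl
    have hnm : n ≤ m := hnl m List.mem_cons_self
    have hclosed : ∀ γ ≤ Γ, S.evalL γ (m :: l) = 0 → S.evalL (S.fs γ m) (m :: l) = 0 :=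
      fun γ hγ hγl => ih hl (hn.trans_le hnm) hml (S.fs_le_top hγ m) hγl
    exact hN.fs_induction hclosed hn hnm hβ (hclosed β hβ h)

lemma Nested.evalL_eq_zero_of_sublist (hN : S.Nested) {ls lt : List ℕ} (h : ls.Sublist lt)
    (hlt : lt.Pairwise (· ≤ ·)) (hlt1 : ∀ e ∈ lt, 1 < e) {β : Ordinal} (hβ : β ≤ Γ)
    (hls : S.evalL β ls = 0) : S.evalL β lt = 0 := by
  induction h generalizing β with
  | slnil => exact hls
  | @cons l₁ l₂ a _ ih =>
    obtain ⟨hal, hl₂⟩ := List.pairwise_cons.mp hlt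
    exact hN.evalL_cons_eq_zero hl₂ (hlt1 a List.mem_cons_self) hal hβ
      (ih hl₂ (fun e he => hlt1 e (List.mem_cons_of_mem a he)) hβ hls)
  | @cons_cons l₁ l₂ a _ ih =>
    exact ih (List.pairwise_cons.mp hlt).2 (fun e he => hlt1 e (List.mem_cons_of_mem a he))
      (S.fs_le_top hβ a) hls

lemma Nested.evalL_cons_eq_zero_of_append_singleton (hN : S.Nested) {v : List ℕ} {M x : ℕ}
    (hv : (v ++ [M]).Pairwise (· ≤ ·)) (hx : 1 < x) (hxv : ∀ e ∈ v ++ [M], x ≤ e)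
    {υ : Ordinal} (hυ : υ ≤ Γ) (h : S.evalL υ (v ++ [M]) = 0) : S.evalL υ (x :: v) = 0 := by
  induction v generalizing x υ with
  | nil =>
    simp only [List.nil_append, evalL_cons, evalL_nil] at h ⊢
    exact nonpos_iff_eq_zero.mp (h ▸ S.mono υ hυ (hxv M List.mem_cons_self))
  | cons m v ih =>
    obtain ⟨hmv, hv⟩ := List.pairwise_cons.mp hv
    have hxm : x ≤ m := hxv m List.mem_cons_self
    have hm : 1 < m := hx.trans_le hxm
    have hmm : S.evalL (S.fs υ m) (m :: v) = 0 := ih hv hm hmv (S.fs_le_top hυ m) h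
    have hclosed : ∀ γ ≤ Γ, S.evalL γ (m :: v) = 0 → S.evalL (S.fs γ m) (m :: v) = 0 :=
      fun γ hγ hγv => hN.evalL_cons_eq_zero (hv.sublist (List.sublist_append_left v [M]))
        hm (fun e he => hmv e (List.mem_append_left _ he)) (S.fs_le_top hγ m) hγv
    exact hN.fs_induction hclosed hx hxm hυ hmm

lemma Nested.evalL_dropLast_eq_zero_of_sublist (hN : S.Nested) {ls lt : List ℕ}
    (h : ls.Sublist lt) (hne : ls ≠ lt) (hlt : lt.Pairwise (· ≤ ·)) (hlt1 : ∀ e ∈ lt, 1 < e)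
    {β : Ordinal} (hβ : β ≤ Γ) (hls : S.evalL β ls = 0) : S.evalL β lt.dropLast = 0 := by
  induction h generalizing β with
  | slnil => exact absurd rfl hne
  | @cons l₁ l₂ a h ih =>
    obtain ⟨hal, hl₂⟩ := List.pairwise_cons.mp hlt
    have hl₂1 : ∀ e ∈ l₂, 1 < e := fun e he => hlt1 e (List.mem_cons_of_mem a he)
    have ha : 1 < a := hlt1 a List.mem_cons_self
    rcases eq_or_ne l₂ [] with rfl | hl₂ne
    · rwa [List.sublist_nil.mp h] at hls
    rw [List.dropLast_cons_of_ne_nil hl₂ne]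
    rcases eq_or_ne l₁ l₂ with rfl | hl₁₂
    · rw [← List.dropLast_append_getLast hl₂ne] at hl₂ hal hls
      exact hN.evalL_cons_eq_zero_of_append_singleton hl₂ ha hal hβ hls
    · exact hN.evalL_cons_eq_zero (hl₂.sublist (List.dropLast_sublist l₂)) ha
        (fun e he => hal e (List.dropLast_subset l₂ he)) hβ (ih hl₁₂ hl₂ hl₂1 hβ hls)
  | @cons_cons l₁ l₂ a h ih =>
    have hl₂ne : l₂ ≠ [] := by
      rintro rfl
      exact hne (by rw [List.sublist_nil.mp h])
    rw [List.dropLast_cons_of_ne_nil hl₂ne]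
    exact ih (fun he => hne (congrArg _ he)) (List.pairwise_cons.mp hlt).2
      (fun e he => hlt1 e (List.mem_cons_of_mem a he)) (S.fs_le_top hβ a) hls

end FSSystem

/-- In a nested system, for finite sets `s ⊆ t` with `min t > 1`: if `s` is `α`-large then so
is `t`; and if `s ⊊ t` and `t` is `α`-size then `s` is `α`-small. -/
theorem nested_large_mono {Γ : Ordinal} (S : FSSystem Γ) (hN : S.Nested)
    (s t : Finset ℕ) (hst : s ⊆ t) (hmin : ∀ m ∈ t, 1 < m)
    (α : Ordinal) (hα : α ≤ Γ) :
    (S.Large α s → S.Large α t) ∧ (s ⊂ t → S.Size α t → S.Small α s) := by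
  have hsub := Finset.sort_sublist_sort_of_subset hst
  have hsort1 : ∀ e ∈ t.sort (· ≤ ·), 1 < e := fun e he => hmin e (by simpa using he)
  refine ⟨hN.evalL_eq_zero_of_sublist hsub (t.pairwise_sort _) hsort1 hα, ?_⟩
  intro hss ⟨_, hdrop⟩
  refine pos_iff_ne_zero.mpr fun hs => hdrop.ne' ?_
  have hne : s.sort (· ≤ ·) ≠ t.sort (· ≤ ·) := fun he =>
    hss.ne (by simpa using congrArg List.toFinset he)
  exact hN.evalL_dropLast_eq_zero_of_sublist hsub hne (t.pairwise_sort _) hsort1 hα hs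
end

section
/- Assume a nested system of fundamental sequences on Γ with norm |·| defined by |α| = min{n > 1 : Γ ⇒_n α}. Then for any ordinals α, β ≤ Γ and any n ≥ |β|: α ≥ β if and only if α ⇒_n β. -/
open Ordinal

/-- `α ⇒_n β`: `β` is obtained from `α` by finitely many applications of `δ ↦ δ[n]`. -/
def FSSystem.Reaches {Γ : Ordinal} (S : FSSystem Γ) (n : ℕ) (α β : Ordinal) : Prop :=
  ∃ k : ℕ, (fun δ => S.fs δ n)^[k] α = β

/-- The norm `|α| = min {n > 1 : Γ ⇒_n α}`. -/
noncomputable def FSSystem.norm {Γ : Ordinal} (S : FSSystem Γ) (α : Ordinal) : ℕ :=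
  sInf {n : ℕ | 1 < n ∧ S.Reaches n Γ α}

/-!
If `Γ ⇒_m β` with `m > 1`, every `α` with `β < α ≤ Γ` satisfies `β ≤ α[m]`: if `δ` is the last
link of the `m`-chain from `Γ` with `α ≤ δ`, then `δ[m] ≤ α[m]` (trivially if `α = δ`, by
nestedness if `δ[m] < α < δ`), and `β ≤ δ[m]`. As `α[m] ≤ α[n]` for `n ≥ m`, descending from `α`
by `δ ↦ δ[n]` never overshoots `β`, so it reaches `β`. The norm is attained: if `Γ ⇒_m δ` and
`β < δ`, pick `j` with `β ≤ δ[j]`; for `n = max j m` the descent gives `Γ ⇒_n δ[n]` with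
`β ≤ δ[n] < δ`, and induction on `δ` applies.
-/

namespace FSSystem

variable {Γ : Ordinal} (S : FSSystem Γ)

lemma fs_lt_self {δ : Ordinal} (hδ : δ ≤ Γ) (h0 : δ ≠ 0) (n : ℕ) : S.fs δ n < δ := by
  have h : S.fs δ n + 1 ≤ ⨆ m : ℕ, S.fs δ m + 1 := le_ciSup bddAbove_of_small n
  rw [S.sup_eq δ hδ h0] at h
  exact Order.add_one_le_iff.mp h

lemma fs_le_self {δ : Ordinal} (hδ : δ ≤ Γ) (n : ℕ) : S.fs δ n ≤ δ := by
  rcases eq_or_ne δ 0 with rfl | h0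
  · exact (S.fs_zero n).le
  · exact (S.fs_lt_self hδ h0 n).le

lemma exists_le_fs {β δ : Ordinal} (hδ : δ ≤ Γ) (hβδ : β < δ) : ∃ j, β ≤ S.fs δ j := by
  have hsup : β < ⨆ j : ℕ, S.fs δ j + 1 := by
    rwa [S.sup_eq δ hδ hβδ.ne_bot]
  obtain ⟨j, hj⟩ := (lt_ciSup_iff bddAbove_of_small).mp hsup
  exact ⟨j, Order.lt_add_one_iff.mp hj⟩

variable {S}

lemma Reaches.refl (n : ℕ) (α : Ordinal) : S.Reaches n α α := ⟨0, rfl⟩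

lemma Reaches.head {n : ℕ} {α β : Ordinal} (h : S.Reaches n (S.fs α n) β) :
    S.Reaches n α β := by
  obtain ⟨k, hk⟩ := h
  exact ⟨k + 1, hk⟩

lemma Reaches.tail {n : ℕ} {α β : Ordinal} (h : S.Reaches n α β) :
    S.Reaches n α (S.fs β n) := by
  obtain ⟨k, hk⟩ := h
  exact ⟨k + 1, by rw [Function.iterate_succ_apply', hk]⟩

lemma Reaches.le {n : ℕ} {α β : Ordinal} (hα : α ≤ Γ) (h : S.Reaches n α β) : β ≤ α := by
  obtain ⟨k, rfl⟩ := h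
  induction k generalizing α with
  | zero => exact le_rfl
  | succ k ih => exact (ih ((S.fs_le_self hα n).trans hα)).trans (S.fs_le_self hα n)

lemma le_fs_of_reaches (hN : S.Nested) {m : ℕ} (hm : 1 < m) {α β δ : Ordinal} (hδ : δ ≤ Γ)
    (h : S.Reaches m δ β) (hβα : β < α) (hαδ : α ≤ δ) : β ≤ S.fs α m := by
  obtain ⟨k, hk⟩ := h
  induction k generalizing δ with
  | zero => exact absurd (hk ▸ hαδ) hβα.not_ge
  | succ k ih =>
    have hδm : S.fs δ m ≤ Γ := (S.fs_le_self hδ m).trans hδ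
    rcases le_or_gt α (S.fs δ m) with hα | hα
    · exact ih hδm hα hk
    have hβδm : β ≤ S.fs δ m := Reaches.le hδm ⟨k, hk⟩
    rcases hαδ.eq_or_lt with rfl | hαδ
    · exact hβδm
    · exact hβδm.trans (not_lt.mp fun hlt => hN α δ m hαδ hδ hm ⟨hlt, hα⟩)

lemma reaches_of_forall_le_fs {n : ℕ} {β : Ordinal}
    (hB : ∀ α, β < α → α ≤ Γ → β ≤ S.fs α n) {α : Ordinal} (hβα : β ≤ α) (hα : α ≤ Γ) :
    S.Reaches n α β := by
  induction α using WellFoundedLT.induction with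
  | _ α ih =>
    rcases hβα.eq_or_lt with rfl | hlt
    · exact Reaches.refl n β
    · have hαn := S.fs_lt_self hα hlt.ne_bot n
      exact (ih _ hαn (hB α hlt hα) (hαn.le.trans hα)).head

lemma reaches_of_reaches_top (hN : S.Nested) {m n : ℕ} (hm : 1 < m) (hmn : m ≤ n)
    {α β : Ordinal} (hβ : S.Reaches m Γ β) (hβα : β ≤ α) (hα : α ≤ Γ) : S.Reaches n α β :=
  reaches_of_forall_le_fs
    (fun α' hβα' hα' => (le_fs_of_reaches hN hm le_rfl hβ hβα' hα').trans (S.mono α' hα' hmn))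
    hβα hα

lemma exists_reaches_top (hN : S.Nested) {β : Ordinal} (hβ : β ≤ Γ) :
    ∃ n, 1 < n ∧ S.Reaches n Γ β := by
  suffices h : ∀ δ, β ≤ δ → δ ≤ Γ → ∀ m, 1 < m → S.Reaches m Γ δ →
      ∃ n, 1 < n ∧ S.Reaches n Γ β from
    h Γ hβ le_rfl 2 one_lt_two (Reaches.refl 2 Γ)
  intro δ
  induction δ using WellFoundedLT.induction with
  | _ δ ih =>
    intro hβδ hδ m hm hδm
    rcases hβδ.eq_or_lt with rfl | hlt
    · exact ⟨m, hm, hδm⟩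
    obtain ⟨j, hj⟩ := S.exists_le_fs hδ hlt
    have hn : 1 < max j m := hm.trans_le (le_max_right j m)
    have hδn : S.Reaches (max j m) Γ δ :=
      reaches_of_reaches_top hN hm (le_max_right j m) hδm hδ le_rfl
    exact ih _ (S.fs_lt_self hδ hlt.ne_bot _)
      (hj.trans (S.mono δ hδ (le_max_left j m))) ((S.fs_le_self hδ _).trans hδ)
      _ hn hδn.tail

lemma norm_mem (hN : S.Nested) {β : Ordinal} (hβ : β ≤ Γ) :
    1 < S.norm β ∧ S.Reaches (S.norm β) Γ β :=
  Nat.sInf_mem (exists_reaches_top hN hβ)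

end FSSystem

/-- In a nested system, for `α, β ≤ Γ` and `n ≥ |β|`: `α ≥ β` iff `α ⇒_n β`. -/
theorem nested_reaches_above_norm {Γ : Ordinal} (S : FSSystem Γ) (hN : S.Nested)
    (α β : Ordinal) (hα : α ≤ Γ) (hβ : β ≤ Γ) (n : ℕ) (hn : S.norm β ≤ n) :
    β ≤ α ↔ S.Reaches n α β := by
  obtain ⟨hnorm, hreach⟩ := S.norm_mem hN hβ
  exact ⟨fun hβα => FSSystem.reaches_of_reaches_top hN hnorm hn hreach hβα hα,
    fun h => h.le hα⟩
end

section
/- Every smooth block is a barrier, i.e. if B ⊆ [ℕ]^{<ω} is a block such that for all s, t ∈ B with |s| < |t| there exists i < |s| with s(i) < t(i), then for all s, t ∈ B it is not the case that s ⊊ t (as sets). -/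
open Ordinal

/-- The base of a family of finite increasing sequences: all naturals occurring in it. -/
def sbase (B : Set (List ℕ)) : Set ℕ := {n | ∃ s ∈ B, n ∈ s}

/-- A block: a non-degenerate front. Finite subsets of `ℕ` are identified with their increasing
enumerations. Every infinite subset of the base (given by its increasing enumeration `f`) has an
initial segment in `B`, and `B` is prefix-free. -/
structure IsBlock (B : Set (List ℕ)) : Prop where
  sorted : ∀ s ∈ B, s.Pairwise (· < ·)
  base_infinite : (sbase B).Infinite
  prefix_exists : ∀ f : ℕ → ℕ, StrictMono f → (∀ i, f i ∈ sbase B) →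
    ∃ k, (List.range k).map f ∈ B
  prefix_free : ∀ s ∈ B, ∀ t ∈ B, s <+: t → s = t

/-- Smoothness: for `s, t ∈ B` with `|s| < |t|` there is `i < |s|` with `s(i) < t(i)`. -/
def IsSmooth (B : Set (List ℕ)) : Prop :=
  ∀ s ∈ B, ∀ t ∈ B, s.length < t.length →
    ∃ i, ∃ (hi : i < s.length) (hi' : i < t.length), s.get ⟨i, hi⟩ < t.get ⟨i, hi'⟩

/-- The tree `T(B)`: the closure of `B` under initial segments. -/
def TreeOf (B : Set (List ℕ)) : Set (List ℕ) := {s | ∃ t ∈ B, s <+: t}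

/-- The child relation on the tree `T(B)`: `t` is a one-point extension of `s` lying in `T(B)`. -/
def childRel (B : Set (List ℕ)) (t s : List ℕ) : Prop :=
  t ∈ TreeOf B ∧ ∃ n, t = s ++ [n]

/-- The height of the node `s` in the well-founded tree `T(B)`. -/
noncomputable def nodeHt (B : Set (List ℕ)) (h : WellFounded (childRel B)) (s : List ℕ) :
    Ordinal :=
  (h.apply s).rank

/-- The height `ht(B)` of the front `B`: the height of the tree `T(B)`. -/
noncomputable def htB (B : Set (List ℕ)) (h : WellFounded (childRel B)) : Ordinal :=
  nodeHt B h []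

/-!
If `s ⊊ t` with `s`, `t` increasing, then `s` is a subsequence of `t`, so `t(i) ≤ s(i)` for every
`i < |s|`. Since also `|s| < |t|`, this contradicts smoothness.
-/

theorem Fin.val_le_val_of_strictMono {m n : ℕ} {f : Fin m → Fin n} (hf : StrictMono f)
    (i : Fin m) : (i : ℕ) ≤ f i := by
  obtain ⟨i, hi⟩ := i
  induction i with
  | zero => exact Nat.zero_le _
  | succ k ih =>
    exact (ih (by omega)).trans_lt (hf (Fin.mk_lt_mk.mpr k.lt_succ_self))

theorem List.getElem_le_getElem_of_subset {α : Type*} [Preorder α] {l₁ l₂ : List α}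
    (h₁ : l₁.Pairwise (· < ·)) (h₂ : l₂.Pairwise (· < ·)) (h : l₁ ⊆ l₂) {i : ℕ}
    (hi₁ : i < l₁.length) (hi₂ : i < l₂.length) : l₂[i] ≤ l₁[i] := by
  obtain ⟨f, hf⟩ := sublist_iff_exists_fin_orderEmbedding_get_eq.mp
    (sublist_of_subperm_of_pairwise (h₁.nodup.subperm h) h₁ h₂)
  have hi : (⟨i, hi₂⟩ : Fin l₂.length) ≤ f ⟨i, hi₁⟩ :=
    Fin.val_le_val_of_strictMono f.strictMono ⟨i, hi₁⟩
  exact (h₂.sortedLT.strictMono_get.monotone hi).trans_eq (hf ⟨i, hi₁⟩).symm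

theorem List.length_lt_length_of_toFinset_ssubset {α : Type*} [DecidableEq α] {l₁ l₂ : List α}
    (h₁ : l₁.Nodup) (h₂ : l₂.Nodup) (h : l₁.toFinset ⊂ l₂.toFinset) : l₁.length < l₂.length := by
  simpa [List.toFinset_card_of_nodup, h₁, h₂] using Finset.card_lt_card h

/-- Every smooth block is a barrier: no element of `B` is a proper subset (as a set) of
another. -/
theorem smooth_block_is_barrier (B : Set (List ℕ)) (hB : IsBlock B) (hsm : IsSmooth B) :
    ∀ s ∈ B, ∀ t ∈ B, ¬ (s.toFinset ⊂ t.toFinset) := by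
  intro s hs t ht hst
  have hs_sorted := hB.sorted s hs
  have ht_sorted := hB.sorted t ht
  have hsub : s ⊆ t := fun x hx => by simpa using hst.subset (List.mem_toFinset.mpr hx)
  obtain ⟨i, hi, hi', hlt⟩ := hsm s hs t ht <|
    List.length_lt_length_of_toFinset_ssubset hs_sorted.nodup ht_sorted.nodup hst
  exact (List.getElem_le_getElem_of_subset hs_sorted ht_sorted hsub hi hi').not_gt hlt
end

section
/- If B is a smooth barrier then the order type of B under the lexicographic order equals ω^α if and only if the height of the well-founded tree T(B) of initial segments of elements of B equals α. -/
open Ordinal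

/-! For a node `s` of `T(B)` let `B_s` be the set of elements of `B` extending `s`. By well-founded
induction on the tree, `B_s` has order type `ω ^ ht(s)`. A leaf gives `B_s = {s}`. An internal node
has infinitely many children `s ++ [e 0], s ++ [e 1], …` with `e` increasing, and `B_s` is the
lexicographically ordered concatenation of the blocks `B_{s ++ [e k]}`, so its type is
`∑ₖ ω ^ ht(s ++ [e k])`. Smoothness makes these heights nondecreasing in `k`: a node lying
pointwise below another one has no greater height. For a nondecreasing sequence `αₖ` the sum
`∑ₖ ω ^ αₖ` is `ω ^ sup (αₖ + 1)`, which is `ω ^ ht(s)`. At `s = []` this gives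
`o.t.(B) = ω ^ ht(B)`, and `ω ^ ·` is injective. -/

open Order

section OmegaSum

variable {γ : Type*} (r : γ → γ → Prop) [IsWellOrder γ r]

theorem type_subrel_le_of_subset {P Q : Set γ} (h : P ⊆ Q) :
    type (Subrel r (· ∈ P)) ≤ type (Subrel r (· ∈ Q)) :=
  (Subrel.inclusionEmbedding r h).ordinal_type_le

theorem type_subrel_union {P Q : Set γ} (h : ∀ p ∈ P, ∀ q ∈ Q, r p q) :
    type (Subrel r (· ∈ P ∪ Q)) = type (Subrel r (· ∈ P)) + type (Subrel r (· ∈ Q)) := by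
  classical
  have hdisj : Disjoint P Q :=
    Set.disjoint_left.2 fun a hP hQ => irrefl a (h a hP a hQ)
  rw [← type_sum_lex]
  refine type_eq.2 ⟨⟨Equiv.Set.union hdisj, fun {a b} => ?_⟩⟩
  rcases a.2 with ha | ha <;> rcases b.2 with hb | hb
  · simp [Equiv.Set.union_apply_left hdisj ha, Equiv.Set.union_apply_left hdisj hb]
  · simp [Equiv.Set.union_apply_left hdisj ha, Equiv.Set.union_apply_right hdisj hb, h _ ha _ hb]
  · simp only [Equiv.Set.union_apply_right hdisj ha, Equiv.Set.union_apply_left hdisj hb,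
      Sum.lex_inr_inl, subrel_val, false_iff]
    exact fun hab => asymm hab (h _ hb _ ha)
  · simp [Equiv.Set.union_apply_right hdisj ha, Equiv.Set.union_apply_right hdisj hb]

theorem typein_subrel_le {P Q : Set γ} {a : γ} (ha : a ∈ P) (h : ∀ b ∈ P, r b a → b ∈ Q) :
    typein (Subrel r (· ∈ P)) ⟨a, ha⟩ ≤ type (Subrel r (· ∈ Q)) := by
  rw [← type_subrel]
  exact RelEmbedding.ordinal_type_le
    ⟨⟨fun b => ⟨b.1.1, h _ b.1.2 b.2⟩, fun b c hbc => by ext; simpa using hbc⟩, Iff.rfl⟩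

variable {r} {X : ℕ → Set γ}

theorem type_biUnion_lt_succ (hX : ∀ j k, j < k → ∀ a ∈ X j, ∀ b ∈ X k, r a b) (m : ℕ) :
    type (Subrel r (· ∈ ⋃ j < m + 1, X j)) =
      type (Subrel r (· ∈ ⋃ j < m, X j)) + type (Subrel r (· ∈ X m)) := by
  rw [Set.biUnion_lt_succ]
  refine type_subrel_union r fun a ha b hb => ?_
  obtain ⟨j, hj, ha⟩ := Set.mem_iUnion₂.1 ha
  exact hX j m hj a ha b hb

variable {α : ℕ → Ordinal} (hX : ∀ j k, j < k → ∀ a ∈ X j, ∀ b ∈ X k, r a b)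
  (htype : ∀ k, type (Subrel r (· ∈ X k)) = ω ^ α k) (hα : Monotone α)
include hX htype hα

theorem type_biUnion_lt_le (m : ℕ) : type (Subrel r (· ∈ ⋃ j < m, X j)) ≤ ω ^ α m * m := by
  induction m with
  | zero => simpa using Subtype.isEmpty_false
  | succ m ih =>
    rw [type_biUnion_lt_succ hX, htype]
    calc _ ≤ ω ^ α m * m + ω ^ α m := add_le_add_left ih _
      _ = ω ^ α m * ↑(m + 1) := by push_cast; rw [mul_add_one]
      _ ≤ ω ^ α (m + 1) * ↑(m + 1) := by gcongr; exacts [omega0_pos, hα m.le_succ]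

theorem opow_mul_le_type_biUnion_lt (k n : ℕ) :
    ω ^ α k * n ≤ type (Subrel r (· ∈ ⋃ j < k + n, X j)) := by
  induction n with
  | zero => simp
  | succ n ih =>
    rw [← add_assoc, type_biUnion_lt_succ hX, htype]
    calc ω ^ α k * ↑(n + 1) = ω ^ α k * n + ω ^ α k := by push_cast; rw [mul_add_one]
      _ ≤ _ := by gcongr; exacts [omega0_pos, hα (k.le_add_right n)]

theorem type_iUnion_eq_opow_iSup_succ :
    type (Subrel r (· ∈ ⋃ k, X k)) = ω ^ ⨆ k, succ (α k) := by
  have hsup : ω ^ ⨆ k, succ (α k) = ⨆ k, ω ^ succ (α k) :=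
    (isNormal_opow one_lt_omega0).map_iSup bddAbove_of_small
  apply le_antisymm
  · refine le_of_forall_lt fun o ho => ?_
    obtain ⟨⟨a, ha⟩, rfl⟩ := typein_surj _ ho
    obtain ⟨k, hak⟩ := Set.mem_iUnion.1 ha
    have hbelow : ∀ b ∈ ⋃ k, X k, r b a → b ∈ ⋃ j < k + 1, X j := by
      intro b hb hba
      obtain ⟨j, hbj⟩ := Set.mem_iUnion.1 hb
      refine Set.mem_iUnion₂.2 ⟨j, ?_, hbj⟩
      by_contra! hkj
      exact asymm hba (hX k j (by omega) a hak b hbj)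
    calc typein _ _ ≤ ω ^ α (k + 1) * ↑(k + 1) :=
          (typein_subrel_le r ha hbelow).trans (type_biUnion_lt_le hX htype hα _)
      _ < ω ^ α (k + 1) * ω := by gcongr; exacts [opow_pos _ omega0_pos, natCast_lt_omega0 _]
      _ = ω ^ succ (α (k + 1)) := (opow_succ _ _).symm
      _ ≤ ω ^ ⨆ k, succ (α k) := by rw [hsup]; exact Ordinal.le_iSup (fun k => ω ^ succ (α k)) _
  · rw [hsup, Ordinal.iSup_le_iff]
    intro k
    rw [opow_succ, mul_le_iff_of_isSuccLimit isSuccLimit_omega0]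
    intro b hb
    obtain ⟨n, rfl⟩ := lt_omega0.1 hb
    exact (opow_mul_le_type_biUnion_lt hX htype hα k n).trans
      (type_subrel_le_of_subset r (Set.iUnion₂_subset_iUnion _ _))

end OmegaSum

theorem exists_strictMono_map_range_eq {S : Set ℕ} (hS : S.Infinite) {l : List ℕ}
    (hl : l.Pairwise (· < ·)) (hlS : ∀ x ∈ l, x ∈ S) :
    ∃ f : ℕ → ℕ, StrictMono f ∧ (∀ i, f i ∈ S) ∧ (List.range l.length).map f = l := by
  induction l generalizing S with
  | nil => exact ⟨Nat.nth (· ∈ S), Nat.nth_strictMono hS, Nat.nth_mem_of_infinite hS, rfl⟩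
  | cons a l ih =>
    rw [List.pairwise_cons] at hl
    obtain ⟨f, hf, hfS, hfl⟩ := ih (hS.sdiff (Set.finite_Iic a)) hl.2
      fun x hx => ⟨hlS x (List.mem_cons_of_mem a hx), not_le.2 (hl.1 x hx)⟩
    refine ⟨fun i => Nat.casesOn i a f, strictMono_nat_of_lt_succ fun i => ?_, fun i => ?_, ?_⟩
    · cases i with
      | zero => exact not_le.1 (hfS 0).2
      | succ i => exact hf i.lt_succ_self
    · cases i with
      | zero => exact hlS a List.mem_cons_self
      | succ i => exact (hfS i).1
    · rw [List.length_cons, List.range_succ_eq_map, List.map_cons, List.map_map]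
      exact congrArg (a :: ·) hfl

section Tree

variable {B : Set (List ℕ)} {s t u : List ℕ} {n : ℕ}

theorem mem_treeOf_of_mem (hs : s ∈ B) : s ∈ TreeOf B := ⟨s, hs, List.prefix_refl s⟩

theorem mem_sbase_of_mem_treeOf (hs : s ∈ TreeOf B) (hn : n ∈ s) : n ∈ sbase B := by
  obtain ⟨t, ht, hst⟩ := hs
  exact ⟨t, ht, hst.subset hn⟩

namespace IsBlock

variable (hB : IsBlock B)
include hB

theorem pairwise_lt_of_mem_treeOf (hs : s ∈ TreeOf B) : s.Pairwise (· < ·) := by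
  obtain ⟨t, ht, hst⟩ := hs
  exact (hB.sorted t ht).sublist hst.sublist

theorem eq_of_prefix_of_mem_treeOf (hu : u ∈ B) (hs : s ∈ TreeOf B) (hus : u <+: s) : s = u := by
  obtain ⟨t, ht, hst⟩ := hs
  obtain rfl := hB.prefix_free u hu t ht (hus.trans hst)
  exact hst.eq_of_length (le_antisymm hst.length_le hus.length_le)

theorem not_mem_of_childRel (h : childRel B t s) : s ∉ B := by
  obtain ⟨ht, n, rfl⟩ := h
  intro hs
  have := congrArg List.length (hB.eq_of_prefix_of_mem_treeOf hs ht (List.prefix_append s [n]))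
  simp at this

theorem exists_mem_prefix_or_prefix_mem {l : List ℕ} (hl : l.Pairwise (· < ·))
    (hlB : ∀ x ∈ l, x ∈ sbase B) : ∃ u ∈ B, u <+: l ∨ l <+: u := by
  obtain ⟨f, hf, hfB, hfl⟩ := exists_strictMono_map_range_eq hB.base_infinite hl hlB
  obtain ⟨k, hk⟩ := hB.prefix_exists f hf hfB
  have hmono : ∀ {m n}, m ≤ n → (List.range m).map f <+: (List.range n).map f := fun hmn => by
    rw [← min_eq_left hmn, ← List.take_range]
    exact (List.take_prefix _ _).map f
  rcases le_total k l.length with hkl | hlk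
  · exact ⟨_, hk, Or.inl (hfl ▸ hmono hkl)⟩
  · exact ⟨_, hk, Or.inr (hfl ▸ hmono hlk)⟩

theorem nil_mem_treeOf : [] ∈ TreeOf B := by
  obtain ⟨u, hu, -⟩ := hB.exists_mem_prefix_or_prefix_mem List.Pairwise.nil (by simp)
  exact ⟨u, hu, List.nil_prefix⟩

theorem append_mem_treeOf (hs : s ∈ TreeOf B) (hsB : s ∉ B) (hn : n ∈ sbase B)
    (hlt : ∀ x ∈ s, x < n) : s ++ [n] ∈ TreeOf B := by
  have hsorted : (s ++ [n]).Pairwise (· < ·) := by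
    simpa [List.pairwise_append] using ⟨hB.pairwise_lt_of_mem_treeOf hs, hlt⟩
  have hbase : ∀ x ∈ s ++ [n], x ∈ sbase B := by
    intro x hx
    rcases List.mem_append.1 hx with hx | hx
    · exact mem_sbase_of_mem_treeOf hs hx
    · exact List.mem_singleton.1 hx ▸ hn
  obtain ⟨u, hu, hun | hnu⟩ := hB.exists_mem_prefix_or_prefix_mem hsorted hbase
  · rcases List.prefix_concat_iff.1 hun with rfl | hus
    · exact mem_treeOf_of_mem hu
    · exact absurd (hB.eq_of_prefix_of_mem_treeOf hu hs hus ▸ hu) hsB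
  · exact ⟨u, hu, hnu⟩

end IsBlock

theorem IsSmooth.mem_of_forall₂_le (hsm : IsSmooth B) (hs : s ∈ TreeOf B) (ht : t ∈ B)
    (hst : List.Forall₂ (· ≤ ·) s t) : s ∈ B := by
  obtain ⟨u, hu, hsu⟩ := hs
  rcases hsu.length_le.lt_or_eq with hlt | heq
  · obtain ⟨hlen, hle⟩ := List.forall₂_iff_get.1 hst
    obtain ⟨i, hi, hi', hlt⟩ := hsm t ht u hu (hlen ▸ hlt)
    have hui : u.get ⟨i, hi'⟩ = s.get ⟨i, hlen ▸ hi⟩ := (hsu.getElem _).symm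
    exact absurd (hle i _ hi) (not_le.2 (hui ▸ hlt))
  · exact hsu.eq_of_length heq ▸ hu

section Height

variable (hwf : WellFounded (childRel B))

theorem nodeHt_lt_of_childRel (h : childRel B t s) : nodeHt B hwf t < nodeHt B hwf s :=
  Acc.rank_lt_of_rel _ h

theorem nodeHt_le_iff {o : Ordinal} :
    nodeHt B hwf s ≤ o ↔ ∀ t, childRel B t s → nodeHt B hwf t < o := by
  rw [nodeHt, Acc.rank_eq, Ordinal.iSup_le_iff, Subtype.forall]
  simp only [Order.succ_le_iff]
  rfl

theorem IsBlock.nodeHt_eq_zero (hB : IsBlock B) (hs : s ∈ B) : nodeHt B hwf s = 0 :=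
  nonpos_iff_eq_zero.1 <|
    (nodeHt_le_iff hwf).2 fun _ h => absurd hs (hB.not_mem_of_childRel h)

theorem IsBlock.nodeHt_mono (hB : IsBlock B) (hsm : IsSmooth B) (hs : s ∈ TreeOf B)
    (ht : t ∈ TreeOf B) (hst : List.Forall₂ (· ≤ ·) s t) : nodeHt B hwf s ≤ nodeHt B hwf t := by
  induction s using hwf.induction generalizing t with
  | _ s ih =>
  -- `t` is not a leaf by smoothness, and a child `s ++ [a]` lies below `t ++ [m]` for `m` large.
  refine (nodeHt_le_iff hwf).2 ?_
  rintro _ ⟨hsa, a, rfl⟩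
  have htB : t ∉ B := fun htB =>
    hB.not_mem_of_childRel ⟨hsa, a, rfl⟩ (hsm.mem_of_forall₂_le hs htB hst)
  obtain ⟨m, hm, ham⟩ := hB.base_infinite.exists_gt (a + t.sum)
  have htm : t ++ [m] ∈ TreeOf B :=
    hB.append_mem_treeOf ht htB hm fun x hx => by have := List.le_sum_of_mem hx; omega
  calc nodeHt B hwf (s ++ [a]) ≤ nodeHt B hwf (t ++ [m]) :=
        ih _ ⟨hsa, a, rfl⟩ hsa htm (List.rel_append hst (.cons (by omega) .nil))
    _ < nodeHt B hwf t := nodeHt_lt_of_childRel hwf ⟨htm, m, rfl⟩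

theorem nodeHt_eq_iSup_succ {e : ℕ → ℕ} (he : ∀ n, s ++ [n] ∈ TreeOf B ↔ n ∈ Set.range e) :
    nodeHt B hwf s = ⨆ k, succ (nodeHt B hwf (s ++ [e k])) := by
  refine le_antisymm ((nodeHt_le_iff hwf).2 ?_) (Ordinal.iSup_le fun k => ?_)
  · rintro _ ⟨hc, n, rfl⟩
    obtain ⟨k, rfl⟩ := (he n).1 hc
    exact (lt_succ _).trans_le (Ordinal.le_iSup (fun k => succ (nodeHt B hwf (s ++ [e k]))) k)
  · exact succ_le_of_lt (nodeHt_lt_of_childRel hwf ⟨(he _).2 ⟨k, rfl⟩, _, rfl⟩)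

end Height

theorem IsBlock.exists_strictMono_range_eq_children (hB : IsBlock B) (hs : s ∈ TreeOf B)
    (hsB : s ∉ B) : ∃ e : ℕ → ℕ, StrictMono e ∧ ∀ n, s ++ [n] ∈ TreeOf B ↔ n ∈ Set.range e := by
  set C : Set ℕ := {n | s ++ [n] ∈ TreeOf B}
  have hC : C.Infinite := Set.infinite_of_forall_exists_gt fun m => by
    obtain ⟨n, hn, hmn⟩ := hB.base_infinite.exists_gt (m + s.sum)
    refine ⟨n, hB.append_mem_treeOf hs hsB hn fun x hx => ?_, by omega⟩
    have := List.le_sum_of_mem hx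
    omega
  refine ⟨Nat.nth (· ∈ C), Nat.nth_strictMono hC, fun n => ?_⟩
  rw [Nat.range_nth_of_infinite (p := (· ∈ C)) hC]
  rfl

def extensions (B : Set (List ℕ)) (s : List ℕ) : Set B := {t | s <+: t.1}

theorem IsBlock.extensions_eq_singleton (hB : IsBlock B) (hs : s ∈ B) :
    extensions B s = {⟨s, hs⟩} := by
  ext t
  exact ⟨fun hst => Subtype.ext (hB.prefix_free s hs t.1 t.2 hst).symm,
    fun h => h ▸ List.prefix_refl s⟩

theorem extensions_eq_iUnion (hsB : s ∉ B) {e : ℕ → ℕ}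
    (he : ∀ n, s ++ [n] ∈ TreeOf B ↔ n ∈ Set.range e) :
    extensions B s = ⋃ k, extensions B (s ++ [e k]) := by
  ext ⟨t, ht⟩
  simp only [extensions, Set.mem_iUnion, Set.mem_ofPred_eq]
  constructor
  · rintro ⟨_ | ⟨n, rest⟩, rfl⟩
    · exact absurd (by simpa using ht) hsB
    · obtain ⟨k, rfl⟩ := (he n).1 ⟨_, ht, rest, by simp⟩
      exact ⟨k, rest, by simp⟩
  · rintro ⟨k, hk⟩
    exact (List.prefix_append _ _).trans hk

def lexRel (B : Set (List ℕ)) (s t : B) : Prop := List.Lex (· < ·) s.1 t.1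

theorem lexRel_of_mem_extensions {m n : ℕ} (hmn : m < n) {a b : B}
    (ha : a ∈ extensions B (s ++ [m])) (hb : b ∈ extensions B (s ++ [n])) : lexRel B a b := by
  obtain ⟨u, hu⟩ := ha
  obtain ⟨v, hv⟩ := hb
  rw [lexRel, ← hu, ← hv, List.append_assoc, List.append_assoc]
  exact (List.Lex.rel hmn).append_left _ s

theorem IsBlock.type_extensions (hB : IsBlock B) (hsm : IsSmooth B)
    (hwf : WellFounded (childRel B)) [IsWellOrder B (lexRel B)] (hs : s ∈ TreeOf B) :
    type (Subrel (lexRel B) (· ∈ extensions B s)) = ω ^ nodeHt B hwf s := by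
  induction s using hwf.induction with
  | _ s ih =>
  by_cases hsB : s ∈ B
  · rw [hB.extensions_eq_singleton hsB, hB.nodeHt_eq_zero hwf hsB, opow_zero]
    exact type_eq_one_of_unique _
  · obtain ⟨e, he, hch⟩ := hB.exists_strictMono_range_eq_children hs hsB
    have hchild : ∀ k, childRel B (s ++ [e k]) s := fun k => ⟨(hch _).2 ⟨k, rfl⟩, _, rfl⟩
    rw [extensions_eq_iUnion hsB hch, nodeHt_eq_iSup_succ hwf hch]
    refine type_iUnion_eq_opow_iSup_succ
      (fun j k hjk a ha b hb => lexRel_of_mem_extensions (he hjk) ha hb)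
      (fun k => ih _ (hchild k) (hchild k).1)
      (fun j k hjk => hB.nodeHt_mono hwf hsm (hchild j).1 (hchild k).1 ?_)
    exact List.rel_append (List.forall₂_refl s) (.cons (he.monotone hjk) .nil)

end Tree

/-- For a smooth barrier `B`, the order type of `B` under the lexicographic order is `ω^α`
if and only if the height of the tree `T(B)` is `α`. -/
theorem smooth_barrier_type_eq_opow_iff_ht (B : Set (List ℕ))
    (hB : IsBlock B) (hsm : IsSmooth B)
    (hwf : WellFounded (childRel B))
    (hwo : IsWellOrder B fun s t : B => List.Lex (· < ·) s.1 t.1) (α : Ordinal) :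
    @Ordinal.type B (fun s t : B => List.Lex (· < ·) s.1 t.1) hwo = omega0 ^ α ↔
      htB B hwf = α := by
  have : IsWellOrder B (lexRel B) := hwo
  have huniv : extensions B [] = Set.univ := Set.eq_univ_of_forall fun _ => List.nil_prefix
  have htype : type (lexRel B) = ω ^ htB B hwf := by
    rw [htB, ← hB.type_extensions hsm hwf hB.nil_mem_treeOf, huniv]
    exact type_eq.2 ⟨⟨(Equiv.Set.univ B).symm, Iff.rfl⟩⟩
  change type (lexRel B) = _ ↔ _
  rw [htype, opow_right_inj one_lt_omega0]
end

section
/- If B is a smooth barrier and X is a final segment of base(B), then ht(B) = ht(B↾X), where B↾X = {s ∈ B : s ⊆ X}. -/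
/-!
Since `T(B↾X) ⊆ T(B)`, only `ht(B) ≤ ht(B↾X)` needs an argument, and it holds for every infinite
`X ⊆ base(B)`. Send a node `s` of `T(B)` to an increasing `t ⊆ X` of the same length that
dominates `s` pointwise; one-point extensions of `s` can be followed by one-point extensions of
`t`, so this is a simulation of `T(B)` in `T(B↾X)` and ranks can only grow along it. The point is
that such a `t` does lie in `T(B↾X)`: continue `t` inside `X` to an infinite increasing sequence;
its initial segment in `B` cannot be shorter than `t`, since it would then dominate a member of
`B` extending `s` while being shorter, contradicting smoothness.
-/

open Ordinal

universe u

theorem Acc.rank_le_of_simulation {α β : Type u} {r : α → α → Prop} {r' : β → β → Prop}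
    (R : α → β → Prop) (hsim : ∀ a b a', R a b → r a' a → ∃ b', r' b' b ∧ R a' b')
    {a : α} {b : β} (ha : Acc r a) (hb : Acc r' b) (hab : R a b) : ha.rank ≤ hb.rank := by
  induction ha generalizing b with
  | intro a _ ih =>
    rw [Acc.rank_eq]
    refine Ordinal.iSup_le fun ⟨a', ha'⟩ => Order.succ_le_of_lt ?_
    obtain ⟨b', hb', hR⟩ := hsim a b a' hab ha'
    exact (ih a' ha' (hb.inv hb') hR).trans_lt (hb.rank_lt_of_rel hb')

/-- The restriction `B↾X`. -/
def restrictTo (B : Set (List ℕ)) (X : Set ℕ) : Set (List ℕ) := {s ∈ B | ∀ x ∈ s, x ∈ X}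

section

variable {B B' : Set (List ℕ)} {X : Set ℕ}

theorem nodeHt_le_of_subset (hB' : B' ⊆ B) (hwf : WellFounded (childRel B))
    (hwf' : WellFounded (childRel B')) (s : List ℕ) : nodeHt B' hwf' s ≤ nodeHt B hwf s :=
  Acc.rank_le_of_simulation Eq
    (fun _ _ a' hab ⟨⟨u, hu, hsu⟩, hn⟩ => ⟨a', hab ▸ ⟨⟨u, hB' hu, hsu⟩, hn⟩, rfl⟩) _ _ rfl

theorem IsSmooth.length_le_of_dominated (hsm : IsSmooth B) {u v : List ℕ} (hu : u ∈ B)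
    (hv : v ∈ B) (hvu : ∀ i (hiu : i < u.length) (hiv : i < v.length), v[i] ≤ u[i]) :
    v.length ≤ u.length := by
  by_contra! hlt
  obtain ⟨i, hiu, hiv, hlt'⟩ := hsm u hu v hv hlt
  exact (hvu i hiu hiv).not_gt hlt'

theorem exists_strictMono_extending (hX : X.Infinite) {t : List ℕ} (ht : t.Pairwise (· < ·))
    (htX : ∀ x ∈ t, x ∈ X) :
    ∃ f : ℕ → ℕ, StrictMono f ∧ (∀ i, f i ∈ X) ∧ ∀ i (hi : i < t.length), f i = t[i] := by
  have htail : (Set.ofPred (· ∈ X \ Set.Iic t.sum)).Infinite := hX.sdiff (Set.finite_Iic _)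
  let f i := if hi : i < t.length then t[i] else Nat.nth (· ∈ X \ Set.Iic t.sum) (i - t.length)
  have hf_tail : ∀ i, t.length ≤ i → f i ∈ X \ Set.Iic t.sum := fun i hi => by
    simpa only [f, dif_neg hi.not_gt] using Nat.nth_mem_of_infinite htail _
  refine ⟨f, fun i j hij => ?_, fun i => ?_, fun i hi => dif_pos hi⟩
  · rcases lt_or_ge j t.length with hj | hj
    · simpa only [f, dif_pos hj, dif_pos (hij.trans hj)] using
        List.pairwise_iff_getElem.1 ht i j (hij.trans hj) hj hij
    rcases lt_or_ge i t.length with hi | hi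
    · simp only [f, dif_pos hi]
      exact (List.le_sum_of_mem (t.getElem_mem hi)).trans_lt (not_le.1 (hf_tail j hj).2)
    · simp only [f, dif_neg hi.not_gt, dif_neg hj.not_gt]
      exact Nat.nth_strictMono htail (by omega)
  · rcases lt_or_ge i t.length with hi | hi
    · simpa only [f, dif_pos hi] using htX _ (t.getElem_mem hi)
    · exact (hf_tail i hi).1

theorem mem_treeOf_restrictTo (hB : IsBlock B) (hsm : IsSmooth B) (hXB : X ⊆ sbase B)
    (hX : X.Infinite) {s t : List ℕ} (hs : s ∈ TreeOf B) (ht : t.Pairwise (· < ·))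
    (htX : ∀ x ∈ t, x ∈ X) (hst : List.Forall₂ (· ≤ ·) s t) : t ∈ TreeOf (restrictTo B X) := by
  obtain ⟨f, hf, hfX, hft⟩ := exists_strictMono_extending hX ht htX
  obtain ⟨k, hk⟩ := hB.prefix_exists f hf fun i => hXB (hfX i)
  have hlen := hst.length_eq
  rcases le_or_gt t.length k with htk | hkt
  · refine ⟨(List.range k).map f, ⟨hk, by simpa using fun i _ => hfX i⟩, ?_⟩
    rw [List.prefix_iff_eq_take]
    exact List.ext_getElem (by simpa using htk) fun i hi _ => by simp [hft i hi]
  · -- `f↾k` is a proper initial segment of `t`, so it dominates every `v ∈ B` extending `s`.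
    exfalso
    obtain ⟨v, hv, hsv⟩ := hs
    have hvk := hsm.length_le_of_dominated hk hv fun i hik hiv => by
      have hit : i < t.length := by simp only [List.length_map, List.length_range] at hik; omega
      calc v[i] = s[i] := (hsv.getElem (hlen ▸ hit)).symm
        _ ≤ t[i] := by simpa using hst.get (hlen ▸ hit) hit
        _ = _ := by simp [hft i hit]
    have hsv_len := hsv.length_le
    simp only [List.length_map, List.length_range] at hvk
    omega

theorem nodeHt_le_nodeHt_restrictTo (hB : IsBlock B) (hsm : IsSmooth B) (hXB : X ⊆ sbase B)
    (hX : X.Infinite) (hwf : WellFounded (childRel B))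
    (hwf' : WellFounded (childRel (restrictTo B X))) {s t : List ℕ}
    (hst : List.Forall₂ (· ≤ ·) s t) (ht : t.Pairwise (· < ·)) (htX : ∀ x ∈ t, x ∈ X) :
    nodeHt B hwf s ≤ nodeHt (restrictTo B X) hwf' t := by
  refine Acc.rank_le_of_simulation
    (fun s t => List.Forall₂ (· ≤ ·) s t ∧ t.Pairwise (· < ·) ∧ ∀ x ∈ t, x ∈ X)
    (fun s t _ ⟨hst, ht, htX⟩ ⟨hs', n, hs'_eq⟩ => ?_) _ _ ⟨hst, ht, htX⟩
  subst hs'_eq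
  obtain ⟨n', hn'X, hn'⟩ := hX.exists_gt (n + t.sum)
  have hst' : List.Forall₂ (· ≤ ·) (s ++ [n]) (t ++ [n']) :=
    List.rel_append hst (.cons (by omega) .nil)
  have ht' : (t ++ [n']).Pairwise (· < ·) :=
    List.pairwise_append.2 ⟨ht, List.pairwise_singleton _ _, fun a ha b hb => by
      rw [List.mem_singleton.1 hb]
      exact (List.le_sum_of_mem ha).trans_lt (by omega)⟩
  have htX' : ∀ x ∈ t ++ [n'], x ∈ X := by
    simpa [or_imp, forall_and] using ⟨htX, hn'X⟩
  exact ⟨t ++ [n'], ⟨mem_treeOf_restrictTo hB hsm hXB hX hs' ht' htX' hst', n', rfl⟩,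
    hst', ht', htX'⟩

end

/-- If `B` is a smooth barrier and `X = {n ∈ base(B) : m ≤ n}` is a final segment of its base,
then `ht(B) = ht(B↾X)` where `B↾X = {s ∈ B : s ⊆ X}`. -/
theorem smooth_barrier_ht_restrict (B : Set (List ℕ)) (hB : IsBlock B) (hsm : IsSmooth B)
    (m : ℕ)
    (hwf : WellFounded (childRel B))
    (hwf' : WellFounded (childRel {s ∈ B | ∀ x ∈ s, x ∈ sbase B ∧ m ≤ x})) :
    htB B hwf = htB {s ∈ B | ∀ x ∈ s, x ∈ sbase B ∧ m ≤ x} hwf' := by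
  have hX : {x | x ∈ sbase B ∧ m ≤ x}.Infinite :=
    (hB.base_infinite.sdiff (Set.finite_Iio m)).mono fun x hx => ⟨hx.1, not_lt.1 hx.2⟩
  exact le_antisymm
    (nodeHt_le_nodeHt_restrictTo hB hsm (fun x hx => hx.1) hX hwf hwf' .nil .nil (by simp))
    (nodeHt_le_of_subset (fun s hs => hs.1) hwf hwf' [])
end

section
/- If A and B are smooth barriers with the same base such that ht(A) < ht(B), then there exist s ∈ A and t ∈ B with s a proper initial segment of t. -/
/-!
If no element of `A` is a proper initial segment of an element of `B`, then every `t ∈ B` is an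
initial segment of an element of `A`: extend `t` to an infinite increasing sequence in the common
base; the prefix of that sequence lying in `A` is comparable with `t`, and it cannot be a proper
initial segment of `t`. Hence `T(B) ⊆ T(A)`, and since the rank of a well-founded relation only
grows when the relation is enlarged, `ht(B) ≤ ht(A)`.
-/

open Ordinal

theorem Acc.rank_le_of_subrelation {α : Type*} {r r' : α → α → Prop} (hsub : Subrelation r r')
    {a : α} (ha : Acc r a) (ha' : Acc r' a) : ha.rank ≤ ha'.rank := by
  induction ha' with
  | intro a _ ih =>
    rw [ha.rank_eq]
    refine Ordinal.iSup_le fun ⟨b, hb⟩ => Order.succ_le_of_lt ?_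
    exact (ih b (hsub hb) (ha.inv hb)).trans_lt (Acc.rank_lt_of_rel _ (hsub hb))

theorem List.map_range_prefix_of_le {α : Type*} (f : ℕ → α) {m n : ℕ} (h : m ≤ n) :
    (List.range m).map f <+: (List.range n).map f := by
  refine List.IsPrefix.map f ?_
  simpa [List.take_range, min_eq_left h] using List.take_prefix m (List.range n)

theorem Set.Infinite.exists_strictMono_extending {S : Set ℕ} (hS : S.Infinite) {t : List ℕ}
    (ht : t.Pairwise (· < ·)) (htS : ∀ n ∈ t, n ∈ S) :
    ∃ f : ℕ → ℕ, StrictMono f ∧ (∀ i, f i ∈ S) ∧ (List.range t.length).map f = t := by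
  -- past the list, enumerate the elements of `S` above `t.sum`, which bounds every entry of `t`
  set p : ℕ → Prop := fun x => x ∈ S ∧ t.sum < x
  have hp : (Set.ofPred p).Infinite := Set.infinite_of_forall_exists_gt fun a => by
    obtain ⟨b, hbS, hb⟩ := hS.exists_gt (max a t.sum)
    exact ⟨b, ⟨hbS, (le_max_right _ _).trans_lt hb⟩, (le_max_left _ _).trans_lt hb⟩
  refine ⟨fun n => if h : n < t.length then t[n] else Nat.nth p (n - t.length), ?_, ?_, ?_⟩
  · refine strictMono_nat_of_lt_succ fun n => ?_
    by_cases h1 : n + 1 < t.length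
    · simp only [dif_pos h1, dif_pos (Nat.lt_of_succ_lt h1)]
      exact List.pairwise_iff_getElem.1 ht _ _ _ _ n.lt_succ_self
    by_cases h0 : n < t.length
    · simp only [dif_pos h0, dif_neg h1]
      exact (List.le_sum_of_mem (List.getElem_mem h0)).trans_lt (Nat.nth_mem_of_infinite hp _).2
    · simp only [dif_neg h0, dif_neg h1]
      exact Nat.nth_strictMono hp (by omega)
  · intro i
    simp only
    split_ifs
    · exact htS _ (List.getElem_mem _)
    · exact (Nat.nth_mem_of_infinite hp _).1
  · refine List.ext_getElem (by simp) fun i h _ => ?_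
    simp only [List.getElem_map, List.getElem_range]
    exact dif_pos (by simpa using h)

theorem IsBlock.exists_prefix_or_prefix {A : Set (List ℕ)} (hA : IsBlock A) {t : List ℕ}
    (ht : t.Pairwise (· < ·)) (htA : ∀ n ∈ t, n ∈ sbase A) :
    ∃ s ∈ A, s <+: t ∨ t <+: s := by
  obtain ⟨f, hf, hfA, hft⟩ := hA.base_infinite.exists_strictMono_extending ht htA
  obtain ⟨k, hk⟩ := hA.prefix_exists f hf hfA
  refine ⟨_, hk, ?_⟩
  rw [← hft]
  exact (le_total k _).imp (List.map_range_prefix_of_le f) (List.map_range_prefix_of_le f)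

theorem treeOf_subset_treeOf {A B : Set (List ℕ)} (h : ∀ t ∈ B, ∃ s ∈ A, t <+: s) :
    TreeOf B ⊆ TreeOf A := by
  rintro u ⟨t, ht, hut⟩
  obtain ⟨s, hs, hts⟩ := h t ht
  exact ⟨s, hs, hut.trans hts⟩

theorem nodeHt_le_nodeHt_of_treeOf_subset {A B : Set (List ℕ)} (h : TreeOf B ⊆ TreeOf A)
    (hwfA : WellFounded (childRel A)) (hwfB : WellFounded (childRel B)) (s : List ℕ) :
    nodeHt B hwfB s ≤ nodeHt A hwfA s :=
  Acc.rank_le_of_subrelation (fun ⟨hu, hus⟩ => ⟨h hu, hus⟩) _ _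

theorem smooth_barrier_lt_ht_general (A B : Set (List ℕ))
    (hA : IsBlock A) (hB : IsBlock B)
    (hbase : sbase A = sbase B)
    (hwfA : WellFounded (childRel A)) (hwfB : WellFounded (childRel B))
    (hht : htB A hwfA < htB B hwfB) :
    ∃ s ∈ A, ∃ t ∈ B, s <+: t ∧ s ≠ t := by
  by_contra! hAB
  have hcover : ∀ t ∈ B, ∃ s ∈ A, t <+: s := by
    intro t ht
    obtain ⟨s, hs, hst | hts⟩ :=
      hA.exists_prefix_or_prefix (hB.sorted t ht) fun n hn => hbase ▸ ⟨t, ht, hn⟩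
    · exact ⟨s, hs, hAB s hs t ht hst ▸ List.prefix_rfl⟩
    · exact ⟨s, hs, hts⟩
  exact hht.not_ge (nodeHt_le_nodeHt_of_treeOf_subset (treeOf_subset_treeOf hcover) hwfA hwfB [])

/-- If `A` and `B` are smooth barriers with the same base and `ht(A) < ht(B)`, then some
`s ∈ A` is a proper initial segment of some `t ∈ B`. -/
theorem smooth_barrier_lt_ht (A B : Set (List ℕ))
    (hA : IsBlock A) (hsmA : IsSmooth A) (hB : IsBlock B) (hsmB : IsSmooth B)
    (hbase : sbase A = sbase B)
    (hwfA : WellFounded (childRel A)) (hwfB : WellFounded (childRel B))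
    (hht : htB A hwfA < htB B hwfB) :
    ∃ s ∈ A, ∃ t ∈ B, s <+: t ∧ s ≠ t :=
  smooth_barrier_lt_ht_general A B hA hB hbase hwfA hwfB hht
end

section
/- Let B be a smooth barrier with ht(B) = α. Then the sequence α[n] := ht(B_n), where B_n = {t : ⟨n⟩⌢t ∈ B}, is a fundamental sequence for α: it is non-decreasing in n and sup{α[n] + 1 : n ∈ ω} = α. -/
open Ordinal

/-- `B_n = {t : ⟨n⟩⌢t ∈ B}`. -/
def subFront (B : Set (List ℕ)) (n : ℕ) : Set (List ℕ) := {t | n :: t ∈ B}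

/-!
The height of `B_n` is the rank of the node `⟨n⟩` in `T(B)`, and the children of the root are
exactly the nodes `⟨n⟩`, so `sup (α[n] + 1) = α` is the recursive description of the rank of the
root. For monotonicity, smoothness forbids a node `t` that pointwise dominates a node `s` of the
same length from lying in `B` while `s` still has children. So every child `s ⌢ a` of `s` is matched
by a child `t ⌢ M` of `t` with `a ≤ M`, and well-founded induction gives `rank s ≤ rank t`.
-/

universe u

section Rank

variable {α β : Type u} {r : α → α → Prop} {s : β → β → Prop}

theorem WellFounded.rank_apply_eq_iSup (hr : WellFounded r) {a : α} {ι : Type u} (g : ι → α)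
    (hg : ∀ b, r b a ↔ ∃ i, g i = b) :
    (hr.apply a).rank = ⨆ i, Order.succ (hr.apply (g i)).rank := by
  rw [Acc.rank_eq]
  apply le_antisymm
  · refine Ordinal.iSup_le fun ⟨b, hb⟩ => ?_
    obtain ⟨i, rfl⟩ := (hg b).1 hb
    exact Ordinal.le_iSup (fun i => Order.succ (hr.apply (g i)).rank) i
  · exact Ordinal.iSup_le fun i =>
      Ordinal.le_iSup (fun b : {b // r b a} => Order.succ (hr.apply b.1).rank)
        ⟨g i, (hg _).2 ⟨i, rfl⟩⟩

theorem WellFounded.rank_apply_map_eq (hr : WellFounded r) (hs : WellFounded s) (f : α → β)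
    (map_rel : ∀ {a b}, r a b ↔ s (f a) (f b))
    (exists_preimage : ∀ {a c}, s c (f a) → ∃ b, f b = c) (a : α) :
    (hr.apply a).rank = (hs.apply (f a)).rank := by
  induction a using hr.induction with
  | _ a ih =>
    have hchildren : ∀ c, s c (f a) ↔ ∃ b : {b // r b a}, f b = c := fun c =>
      ⟨fun hc => by obtain ⟨b, rfl⟩ := exists_preimage hc; exact ⟨⟨b, map_rel.2 hc⟩, rfl⟩,
        fun ⟨⟨b, hb⟩, hbc⟩ => hbc ▸ map_rel.1 hb⟩
    rw [Acc.rank_eq, hs.rank_apply_eq_iSup (fun b : {b // r b a} => f b) hchildren]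
    exact iSup_congr fun b => congrArg Order.succ (ih b.1 b.2)

end Rank

theorem List.map_range_prefix {α : Type*} (f : ℕ → α) {a b : ℕ} (h : a ≤ b) :
    (List.range a).map f <+: (List.range b).map f := by
  refine List.IsPrefix.map f ?_
  simpa [Nat.min_eq_left h] using List.take_prefix a (List.range b)

section Tree

variable {B : Set (List ℕ)}

theorem mem_treeOf_of_mem_s14 {t : List ℕ} (ht : t ∈ B) : t ∈ TreeOf B := ⟨t, ht, List.prefix_rfl⟩

theorem mem_treeOf_subFront {n : ℕ} {t : List ℕ} :
    t ∈ TreeOf (subFront B n) ↔ n :: t ∈ TreeOf B := by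
  constructor
  · rintro ⟨u, hu, htu⟩
    exact ⟨n :: u, hu, List.cons_prefix_cons.2 ⟨rfl, htu⟩⟩
  · rintro ⟨_ | ⟨m, u⟩, hu, htu⟩
    · simp at htu
    · obtain ⟨rfl, htu'⟩ := List.cons_prefix_cons.1 htu
      exact ⟨u, hu, htu'⟩

theorem childRel_subFront {n : ℕ} {c t : List ℕ} :
    childRel (subFront B n) c t ↔ childRel B (n :: c) (n :: t) := by
  simp only [childRel, mem_treeOf_subFront, List.cons_append, List.cons.injEq, true_and]

theorem nodeHt_subFront (hwf : WellFounded (childRel B)) {n : ℕ}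
    (hwfn : WellFounded (childRel (subFront B n))) (t : List ℕ) :
    nodeHt (subFront B n) hwfn t = nodeHt B hwf (n :: t) :=
  hwfn.rank_apply_map_eq hwf (List.cons n) childRel_subFront
    (fun ⟨_, _, hm⟩ => ⟨_, (hm.trans (List.cons_append ..)).symm⟩) t

theorem IsBlock.sorted_of_mem_treeOf (hB : IsBlock B) {t : List ℕ} (ht : t ∈ TreeOf B) :
    t.Pairwise (· < ·) := by
  obtain ⟨u, hu, htu⟩ := ht
  exact (hB.sorted u hu).sublist htu.sublist

theorem IsBlock.eq_of_prefix_of_mem_treeOf_s14 (hB : IsBlock B) {u t : List ℕ} (hu : u ∈ B)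
    (ht : t ∈ TreeOf B) (hut : u <+: t) : t = u := by
  obtain ⟨v, hv, htv⟩ := ht
  obtain rfl := hB.prefix_free u hu v hv (hut.trans htv)
  exact htv.eq_of_length (le_antisymm htv.length_le hut.length_le)

theorem IsBlock.nil_not_mem (hB : IsBlock B) (hbase : sbase B = Set.univ) : [] ∉ B := by
  intro hnil
  obtain ⟨u, hu, h0u⟩ : 0 ∈ sbase B := hbase ▸ trivial
  obtain rfl := hB.eq_of_prefix_of_mem_treeOf_s14 hnil (mem_treeOf_of_mem_s14 hu) List.nil_prefix
  exact List.not_mem_nil h0u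

/-- Enumerating `t` followed by `M, M + 1, …` gives an infinite increasing sequence; its initial
segment in `B` cannot be a prefix of `t ∉ B`, so it extends `t ++ [M]`. -/
theorem IsBlock.append_mem_treeOf_s14 (hB : IsBlock B) (hbase : sbase B = Set.univ) {t : List ℕ}
    {M : ℕ} (ht : t ∈ TreeOf B) (htB : t ∉ B) (hM : ∀ x ∈ t, x < M) :
    t ++ [M] ∈ TreeOf B := by
  set L := t.length
  let f : ℕ → ℕ := fun i => if h : i < L then t[i] else M + (i - L)
  have hf_mono : StrictMono f := by
    refine strictMono_nat_of_lt_succ fun i => ?_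
    by_cases hi : i + 1 < L
    · simp only [f, dif_pos hi, dif_pos (Nat.lt_of_succ_lt hi)]
      exact (hB.sorted_of_mem_treeOf ht).rel_get_of_lt (a := ⟨i, _⟩) (b := ⟨i + 1, hi⟩)
        (Nat.lt_succ_self i)
    by_cases hi' : i < L
    · simp only [f, dif_pos hi', dif_neg hi]
      have hlast := hM _ (List.getElem_mem hi')
      omega
    · simp only [f, dif_neg hi, dif_neg hi']
      omega
  have hf_t : (List.range L).map f = t :=
    List.ext_getElem (by simp [L]) fun i _ hi => by simp [f, L, hi]
  have hf_tM : (List.range (L + 1)).map f = t ++ [M] := by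
    simp [List.range_succ, hf_t, f]
  obtain ⟨k, hk⟩ := hB.prefix_exists f hf_mono fun i => hbase ▸ trivial
  rcases le_or_gt k L with hkL | hLk
  · have hprefix : (List.range k).map f <+: t := hf_t ▸ List.map_range_prefix f hkL
    exact absurd (hB.eq_of_prefix_of_mem_treeOf_s14 hk ht hprefix ▸ hk) htB
  · exact ⟨_, hk, hf_tM ▸ List.map_range_prefix f hLk⟩

theorem IsBlock.singleton_mem_treeOf (hB : IsBlock B) (hbase : sbase B = Set.univ) (n : ℕ) :
    [n] ∈ TreeOf B := by
  obtain ⟨u, hu, -⟩ : 0 ∈ sbase B := hbase ▸ trivial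
  exact hB.append_mem_treeOf_s14 hbase ⟨u, hu, List.nil_prefix⟩ (hB.nil_not_mem hbase)
    (by simp)

theorem IsBlock.nodeHt_nil (hB : IsBlock B) (hbase : sbase B = Set.univ)
    (hwf : WellFounded (childRel B)) :
    nodeHt B hwf [] = ⨆ n : ℕ, Order.succ (nodeHt B hwf [n]) :=
  hwf.rank_apply_eq_iSup (fun n => [n]) fun _ =>
    ⟨fun ⟨_, m, hm⟩ => ⟨m, hm.symm⟩,
      fun ⟨n, hn⟩ => hn ▸ ⟨hB.singleton_mem_treeOf hbase n, n, rfl⟩⟩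

theorem IsSmooth.not_mem_of_forall₂_le (hsm : IsSmooth B) {s t : List ℕ} {a : ℕ}
    (hs : s ++ [a] ∈ TreeOf B) (hst : List.Forall₂ (· ≤ ·) s t) : t ∉ B := by
  intro ht
  obtain ⟨w, hw, hsw⟩ := hs
  have hlen : t.length < w.length := by
    have hsw_len := hsw.length_le
    have hst_len := hst.length_eq
    simp only [List.length_append, List.length_singleton] at hsw_len
    omega
  obtain ⟨i, hit, hiw, hlt⟩ := hsm t ht w hw hlen
  have his : i < s.length := hst.length_eq ▸ hit
  have hwi : w[i] = s[i] := by
    rw [← (List.prefix_append s [a]).trans hsw |>.getElem his]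
  have hle := hst.get his hit
  simp only [List.get_eq_getElem] at hlt hle
  omega

theorem nodeHt_le_of_forall₂_le (hB : IsBlock B) (hsm : IsSmooth B) (hbase : sbase B = Set.univ)
    (hwf : WellFounded (childRel B)) {s t : List ℕ} (ht : t ∈ TreeOf B)
    (hst : List.Forall₂ (· ≤ ·) s t) : nodeHt B hwf s ≤ nodeHt B hwf t := by
  induction s using hwf.induction generalizing t with
  | _ s ih =>
    rw [nodeHt, Acc.rank_eq]
    refine Ordinal.iSup_le ?_
    rintro ⟨_, hc, a, rfl⟩
    refine Order.succ_le_of_lt ?_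
    set M := a + t.sum + 1
    have htM : childRel B (t ++ [M]) t := ⟨hB.append_mem_treeOf_s14 hbase ht
      (hsm.not_mem_of_forall₂_le hc hst)
      fun x hx => by have := List.le_sum_of_mem hx; omega, M, rfl⟩
    calc (hwf.apply (s ++ [a])).rank
        ≤ nodeHt B hwf (t ++ [M]) :=
          ih (s ++ [a]) ⟨hc, a, rfl⟩ htM.1 (List.rel_append hst (.cons (by omega) .nil))
      _ < nodeHt B hwf t := Acc.rank_lt_of_rel _ htM

end Tree

/-- If `B` is a smooth barrier (with base `ℕ`) and `ht(B) = α`, then `α[n] := ht(B_n)` is a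
fundamental sequence for `α`: non-decreasing with `sup {α[n] + 1 : n} = α`. -/
theorem smooth_barrier_fundamental_sequence (B : Set (List ℕ))
    (hB : IsBlock B) (hsm : IsSmooth B) (hbase : sbase B = Set.univ)
    (hwf : WellFounded (childRel B))
    (hwfn : ∀ n : ℕ, WellFounded (childRel (subFront B n)))
    (α : Ordinal) (hα : htB B hwf = α) :
    Monotone (fun n : ℕ => htB (subFront B n) (hwfn n)) ∧
      (⨆ n : ℕ, htB (subFront B n) (hwfn n) + 1) = α := by
  have hsub (n : ℕ) : htB (subFront B n) (hwfn n) = nodeHt B hwf [n] :=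
    nodeHt_subFront hwf (hwfn n) []
  refine ⟨fun m n hmn => ?_, ?_⟩
  · simp only [hsub]
    exact nodeHt_le_of_forall₂_le hB hsm hbase hwf (hB.singleton_mem_treeOf hbase n)
      (.cons hmn .nil)
  · rw [← hα, htB, hB.nodeHt_nil hbase hwf]
    simp only [hsub, Order.succ_eq_add_one]
end

section
/- Let α, β be ordinals with α = sup_n α_n and β = sup_n β_n. Then the natural (Hessenberg) sum satisfies α # β = max( sup_n (α_n # β), sup_n (α # β_n) ). -/
open Ordinal

universe u

namespace Ordinal

/-- Natural addition on ordinals `a ♯ b` (definition of the former `Mathlib.SetTheory.Ordinal.NaturalOps`). -/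
noncomputable def nadd : Ordinal.{u} → Ordinal.{u} → Ordinal.{u}
  | a, b =>
    max (blsub.{u, u} a fun a' _ => nadd a' b) (blsub.{u, u} b fun b' _ => nadd a b')
termination_by a b => (a, b)
decreasing_by
  all_goals first
    | exact Prod.Lex.left _ _ (by assumption)
    | exact Prod.Lex.right _ (by assumption)

end Ordinal

namespace NaturalOps

scoped infixl:65 " ♯ " => Ordinal.nadd

end NaturalOps

open scoped NaturalOps

/-!
By its recursive definition, `α ♯ β` is the least ordinal lying strictly above `α' ♯ β` for all
`α' < α` and above `α ♯ β'` for all `β' < β`. Every `α' < ⨆ n, α_n` lies below some `α_n`, so by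
strict monotonicity `α' ♯ β < α_n ♯ β`, and symmetrically in the second argument; the reverse
inequality is monotonicity.
-/

namespace Ordinal

set_option linter.deprecated false in
theorem nadd_eq_max_blsub (a b : Ordinal.{u}) :
    a ♯ b = max (blsub.{u, u} a fun a' _ => a' ♯ b) (blsub.{u, u} b fun b' _ => a ♯ b') := by
  rw [nadd]

set_option linter.deprecated false in
theorem lt_nadd_iff {a b c : Ordinal.{u}} :
    a < b ♯ c ↔ (∃ b' < b, a ≤ b' ♯ c) ∨ ∃ c' < c, a ≤ b ♯ c' := by
  simp only [nadd_eq_max_blsub b c, lt_max_iff, lt_blsub_iff, exists_prop]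

set_option linter.deprecated false in
theorem nadd_le_iff {a b c : Ordinal.{u}} :
    b ♯ c ≤ a ↔ (∀ b' < b, b' ♯ c < a) ∧ ∀ c' < c, b ♯ c' < a := by
  simp only [nadd_eq_max_blsub b c, max_le_iff, blsub_le_iff]

theorem nadd_left_strictMono (a : Ordinal.{u}) : StrictMono (a ♯ ·) :=
  fun _ _ h => lt_nadd_iff.2 (.inr ⟨_, h, le_rfl⟩)

theorem nadd_right_strictMono (a : Ordinal.{u}) : StrictMono (· ♯ a) :=
  fun _ _ h => lt_nadd_iff.2 (.inl ⟨_, h, le_rfl⟩)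

theorem nadd_iSup {ι κ : Type*} [Small.{u} ι] [Small.{u} κ] (a : ι → Ordinal.{u})
    (b : κ → Ordinal.{u}) :
    (⨆ i, a i) ♯ (⨆ j, b j) = max (⨆ i, a i ♯ ⨆ j, b j) (⨆ j, (⨆ i, a i) ♯ b j) := by
  refine le_antisymm (nadd_le_iff.2 ⟨fun a' ha' => ?_, fun b' hb' => ?_⟩) (max_le ?_ ?_)
  · obtain ⟨i, hi⟩ := Ordinal.lt_iSup_iff.1 ha'
    exact lt_max_of_lt_left <|
      (nadd_right_strictMono _ hi).trans_le (Ordinal.le_iSup (fun i => a i ♯ ⨆ j, b j) i)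
  · obtain ⟨j, hj⟩ := Ordinal.lt_iSup_iff.1 hb'
    exact lt_max_of_lt_right <|
      (nadd_left_strictMono _ hj).trans_le (Ordinal.le_iSup (fun j => (⨆ i, a i) ♯ b j) j)
  · exact Ordinal.iSup_le fun i => (nadd_right_strictMono _).monotone (Ordinal.le_iSup a i)
  · exact Ordinal.iSup_le fun j => (nadd_left_strictMono _).monotone (Ordinal.le_iSup b j)

end Ordinal

/-- If `α = sup_n α_n` and `β = sup_n β_n`, then the natural (Hessenberg) sum satisfies
`α ♯ β = max (sup_n (α_n ♯ β)) (sup_n (α ♯ β_n))`. -/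
theorem nadd_sup_eq (a b : ℕ → Ordinal) (α β : Ordinal)
    (hα : α = ⨆ n, a n) (hβ : β = ⨆ n, b n) :
    α ♯ β = max (⨆ n, a n ♯ β) (⨆ n, α ♯ b n) := by
  subst hα hβ
  exact nadd_iSup a b
end
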